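/- arXiv:2506.16577 — 8 statements merged into one kernel-verified Lean document; each statement's English description precedes it below -/
import Mathlib

section
/- For every integer g ≥ 2 and every t ≥ 0, the sequences A_t and B_t are equal: A_t = B_t. -/
/-!
Both sequences agree up to `t = g + 1`, where each equals `2^(g+1) - 2`. Subtracting the recurrence
for `B` at `t - 1` from the one at `t`, the two windows of `g - 1` terms overlap except at their
ends, which leaves `B t - B (t-1) = B (t-1) - B (t-g)`: for `t ≥ g + 2` the sequence `B` satisfies
the recurrence of `A`, and a sequence of that recurrence is determined by its first `g + 1` terms.
-/

open Finset

lemma sum_Icc_sub_add_eq_add_sum_Icc {M : Type*} [AddCommMonoid M] (f : ℕ → M) (t k : ℕ) :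
    ∑ i ∈ Icc 1 k, f (t - i) + f (t - (k + 1)) = f (t - 1) + ∑ i ∈ Icc 1 k, f (t - 1 - i) := by
  induction k with
  | zero => simp
  | succ k ih =>
    rw [sum_Icc_succ_top (by omega), ih, sum_Icc_succ_top (by omega), add_assoc,
      Nat.sub_sub t 1 (k + 1), Nat.add_comm 1 (k + 1)]

lemma sum_Icc_two_pow (k : ℕ) : ∑ i ∈ Icc 1 k, (2 : ℤ) ^ (k + 2 - i) = 2 ^ (k + 2) - 4 := by
  induction k with
  | zero => simp
  | succ k ih =>
    have hshift : ∀ i ∈ Icc 1 k, (2 : ℤ) ^ (k + 1 + 2 - i) = 2 * 2 ^ (k + 2 - i) := fun i hi => by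
      rw [← pow_succ', show k + 1 + 2 - i = k + 2 - i + 1 by simp at hi; omega]
    rw [sum_Icc_succ_top (by omega), sum_congr rfl hshift, ← mul_sum, ih,
      show k + 1 + 2 - (k + 1) = 2 by omega]
    ring

lemma two_mul_sub_of_eq_sum_Icc_add {R : Type*} [CommRing R] {f : ℕ → R} {g n : ℕ} {c : R}
    (hg : 1 ≤ g) (hf : ∀ t, n ≤ t → f t = ∑ i ∈ Icc 1 (g - 1), f (t - i) + c)
    (t : ℕ) (ht : n + 1 ≤ t) : f t = 2 * f (t - 1) - f (t - g) := by
  have hwindow := sum_Icc_sub_add_eq_add_sum_Icc f t (g - 1)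
  rw [Nat.sub_add_cancel hg] at hwindow
  have hprev := hf (t - 1) (by omega)
  simp only [Nat.sub_sub] at hprev hwindow
  linear_combination hf t (by omega) - hprev + hwindow

lemma eq_of_eq_of_two_mul_sub {R : Type*} [Ring R] {f f' : ℕ → R} {g n : ℕ} (hg : 1 ≤ g)
    (hinit : ∀ t, t ≤ n → f t = f' t)
    (hf : ∀ t, n + 1 ≤ t → f t = 2 * f (t - 1) - f (t - g))
    (hf' : ∀ t, n + 1 ≤ t → f' t = 2 * f' (t - 1) - f' (t - g)) (t : ℕ) : f t = f' t := by
  induction t using Nat.strong_induction_on with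
  | _ t ih =>
    rcases le_or_gt t n with ht | ht
    · exact hinit t ht
    · rw [hf t ht, hf' t ht, ih (t - 1) (by omega), ih (t - g) (by omega)]

/-- For every integer `g ≥ 2`, the sequence `A` (number of distinct genealogical
ancestors under `(g-1)`th-cousin mating, with `A t = 2^t` for `t ≤ g` and
`A t = 2·A (t-1) − A (t-g)` for `t ≥ g+1`) equals the Fibonacci-like sequence `B`
(with `B t = 2^t` for `t ≤ g` and `B t = (∑_{i=1}^{g-1} B (t-i)) + 2` for `t ≥ g+1`). -/
theorem A_eq_B (g : ℕ) (hg : 2 ≤ g) (A B : ℕ → ℤ)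
    (hA₁ : ∀ t, t ≤ g → A t = 2 ^ t)
    (hA₂ : ∀ t, g + 1 ≤ t → A t = 2 * A (t - 1) - A (t - g))
    (hB₁ : ∀ t, t ≤ g → B t = 2 ^ t)
    (hB₂ : ∀ t, g + 1 ≤ t → B t = (∑ i ∈ Finset.Icc 1 (g - 1), B (t - i)) + 2) :
    ∀ t, A t = B t := by
  have hinit : ∀ t, t ≤ g + 1 → A t = B t := by
    intro t ht
    rcases ht.lt_or_eq with ht | rfl
    · rw [hA₁ t (by omega), hB₁ t (by omega)]
    obtain ⟨k, rfl⟩ : ∃ k, g = k + 1 := ⟨g - 1, by omega⟩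
    have hB : ∀ i ∈ Icc 1 (k + 1 - 1), B (k + 1 + 1 - i) = 2 ^ (k + 2 - i) := fun i hi => by
      simp only [mem_Icc] at hi
      exact hB₁ _ (by omega)
    rw [hA₂ _ le_rfl, hB₂ _ le_rfl, sum_congr rfl hB, Nat.add_sub_cancel k 1, sum_Icc_two_pow,
      Nat.add_sub_cancel (k + 1) 1, Nat.add_sub_cancel_left, hA₁ _ le_rfl, hA₁ 1 (by omega)]
    ring
  exact eq_of_eq_of_two_mul_sub (by omega) hinit (fun t ht => hA₂ t (by omega))
    (two_mul_sub_of_eq_sum_Icc_add (by omega) hB₂)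
end

section
/- In the case g = 3, for all t ≥ 1 the sequence A_t satisfies A_t = 2·f_{t+2} − 2, where (f_t) is the Fibonacci sequence with f_0 = 0, f_1 = 1, and f_t = f_{t−1} + f_{t−2} for t ≥ 2. -/
/-!
Both `t ↦ A (t + 1)` and `t ↦ 2 fib (t + 3) - 2` solve the linear recurrence
`u (n + 3) = 2 u (n + 2) - u n`: for the second this is `fib (n + 3) = 2 fib (n + 2) - fib n`
(two Fibonacci steps), and constants solve it because `1 - 2 + 1 = 0`. A solution of an order-3
recurrence is determined by its first three values, and these are `2, 4, 8` for both.
-/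

namespace Nat

theorem fib_add_three_eq_two_mul_fib_add_two_sub (n : ℕ) :
    (fib (n + 3) : ℤ) = 2 * fib (n + 2) - fib n := by
  have h₁ : fib (n + 2) = fib n + fib (n + 1) := fib_add_two
  have h₂ : fib (n + 3) = fib (n + 1) + fib (n + 2) := fib_add_two
  push_cast [h₂, h₁]
  ring

end Nat

def twiceMinusThirdRecurrence : LinearRecurrence ℤ := ⟨3, ![-1, 0, 2]⟩

theorem twiceMinusThirdRecurrence_isSolution_iff (u : ℕ → ℤ) :
    twiceMinusThirdRecurrence.IsSolution u ↔ ∀ n, u (n + 3) = 2 * u (n + 2) - u n := by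
  refine forall_congr' fun n ↦ ?_
  change u (n + 3) = ∑ i : Fin 3, ![-1, 0, 2] i * u (n + i) ↔ _
  simp only [Fin.sum_univ_three, Matrix.cons_val_zero, Matrix.cons_val_one, Matrix.cons_val_two,
    Matrix.tail_cons, Matrix.head_cons, Fin.val_zero, Fin.val_one, Fin.val_two, add_zero]
  constructor <;> intro h <;> linarith

theorem twiceMinusThirdRecurrence_isSolution_two_mul_fib_sub_two :
    twiceMinusThirdRecurrence.IsSolution fun n ↦ 2 * (Nat.fib (n + 3) : ℤ) - 2 := by
  rw [twiceMinusThirdRecurrence_isSolution_iff]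
  intro n
  rw [Nat.fib_add_three_eq_two_mul_fib_add_two_sub (n + 3)]
  ring

/-- In the case `g = 3` (second-cousin mating), the ancestor-count sequence `A`
satisfies `A t = 2·fib (t+2) − 2` for all `t ≥ 1`, where `fib` is the Fibonacci
sequence with `fib 0 = 0`, `fib 1 = 1`. -/
theorem A_eq_two_fib_sub_two (A : ℕ → ℤ)
    (hA₁ : ∀ t, t ≤ 3 → A t = 2 ^ t)
    (hA₂ : ∀ t, 4 ≤ t → A t = 2 * A (t - 1) - A (t - 3)) :
    ∀ t, 1 ≤ t → A t = 2 * (Nat.fib (t + 2) : ℤ) - 2 := by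
  have hsol : twiceMinusThirdRecurrence.IsSolution fun n ↦ A (n + 1) := by
    rw [twiceMinusThirdRecurrence_isSolution_iff]
    exact fun n ↦ hA₂ (n + 4) (by omega)
  have hshift : (fun n ↦ A (n + 1)) = fun n ↦ 2 * (Nat.fib (n + 3) : ℤ) - 2 := by
    refine (twiceMinusThirdRecurrence.eq_iff_eqOn_range_order _ _ hsol
      twiceMinusThirdRecurrence_isSolution_two_mul_fib_sub_two).mpr ?_
    intro n hn
    have hn : n < 3 := Finset.mem_range.mp hn
    interval_cases n <;> simp [hA₁, Nat.fib_add_two]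
  intro t ht
  obtain ⟨n, rfl⟩ : ∃ n, t = n + 1 := ⟨t - 1, by omega⟩
  exact congrFun hshift n
end

section
/- For every integer g ≥ 2 and every real number z with |z| < 1/2, the series ∑_{t≥0} A_t z^t converges, 1 − 2z + z^g ≠ 0, and ∑_{t≥0} A_t z^t = (1 + z^g)/(1 − 2z + z^g). -/
/-! Multiplying `∑ A_t z^t` by `1 - 2z + z^g` telescopes the recurrence: every coefficient of
the product vanishes except those of `z^0` and `z^g`, which are `1`. Convergence for `|z| < 1/2`
comes from `1 ≤ A_t ≤ 2^t`, since the sequence is nondecreasing and so `A_t ≤ 2 A_{t-1}`. -/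

theorem HasSum.shift_mul_pow {R : Type*} [CommSemiring R] [TopologicalSpace R]
    [IsTopologicalSemiring R] {f : ℕ → R} {z S : R} (h : HasSum (fun t ↦ f t * z ^ t) S)
    (k : ℕ) : HasSum (fun t ↦ (if k ≤ t then f (t - k) else 0) * z ^ t) (z ^ k * S) := by
  refine ((add_left_injective k).hasSum_iff fun t ht ↦ ?_).mp ?_
  · have : ¬ k ≤ t := fun hkt ↦ ht ⟨t - k, Nat.sub_add_cancel hkt⟩
    simp [this]
  · refine (h.mul_left (z ^ k)).congr_fun fun t ↦ ?_
    simp only [Function.comp_apply, Nat.le_add_left, if_true, Nat.add_sub_cancel, pow_add]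
    ring

theorem one_sub_two_mul_add_pow_pos {z : ℝ} (hz : |z| < 1 / 2) (n : ℕ) :
    0 < 1 - 2 * z + z ^ n := by
  rcases le_or_gt 0 z with hz0 | hz0
  · linarith [pow_nonneg hz0 n, le_abs_self z]
  · have : |z ^ n| ≤ 1 := by
      rw [abs_pow]
      exact pow_le_one₀ (abs_nonneg z) (by linarith)
    linarith [neg_abs_le (z ^ n)]

theorem summable_mul_pow_of_abs_le_two_pow {a : ℕ → ℝ} (ha : ∀ t, |a t| ≤ 2 ^ t) {z : ℝ}
    (hz : |z| < 1 / 2) : Summable fun t ↦ a t * z ^ t := by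
  refine .of_norm_bounded (summable_geometric_of_lt_one (by positivity) (by linarith :
    2 * |z| < 1)) fun t ↦ ?_
  rw [Real.norm_eq_abs, abs_mul, abs_pow, mul_pow]
  gcongr
  exact ha t

structure IsDoublingSeq (g : ℕ) (A : ℕ → ℤ) : Prop where
  eq_two_pow : ∀ t, t ≤ g → A t = 2 ^ t
  eq_two_mul_sub : ∀ t, g + 1 ≤ t → A t = 2 * A (t - 1) - A (t - g)

namespace IsDoublingSeq

variable {g : ℕ} {A : ℕ → ℤ}

theorem apply_zero (h : IsDoublingSeq g A) : A 0 = 1 := by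
  simpa using h.eq_two_pow 0 (Nat.zero_le g)

theorem monotone (h : IsDoublingSeq g A) (hg : 0 < g) : Monotone A := by
  suffices ∀ t s, s ≤ t → A s ≤ A t from fun s t hst ↦ this t s hst
  intro t
  induction t using Nat.strong_induction_on with
  | _ t ih =>
    intro s hst
    rcases hst.eq_or_lt with rfl | hst
    · rfl
    have hstep : A (t - 1) ≤ A t := by
      by_cases htg : t ≤ g
      · rw [h.eq_two_pow t htg, h.eq_two_pow (t - 1) (by omega)]
        exact pow_le_pow_right₀ (by norm_num) (by omega)
      · have := ih (t - 1) (by omega) (t - g) (by omega)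
        rw [h.eq_two_mul_sub t (by omega)]
        linarith
    exact (ih (t - 1) (by omega) s (by omega)).trans hstep

theorem one_le (h : IsDoublingSeq g A) (hg : 0 < g) (t : ℕ) : 1 ≤ A t :=
  h.apply_zero ▸ h.monotone hg (Nat.zero_le t)

theorem le_two_pow (h : IsDoublingSeq g A) (hg : 0 < g) (t : ℕ) : A t ≤ 2 ^ t := by
  induction t using Nat.strong_induction_on with
  | _ t ih =>
    by_cases htg : t ≤ g
    · exact (h.eq_two_pow t htg).le
    · have h₁ := ih (t - 1) (by omega)
      have h₂ := h.one_le hg (t - g)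
      have h₃ : (2 : ℤ) ^ t = 2 * 2 ^ (t - 1) := by
        rw [← pow_succ']
        congr 1
        omega
      rw [h.eq_two_mul_sub t (by omega)]
      linarith

theorem abs_le_two_pow (h : IsDoublingSeq g A) (hg : 0 < g) (t : ℕ) : |A t| ≤ 2 ^ t := by
  rw [abs_of_pos (h.one_le hg t)]
  exact h.le_two_pow hg t

theorem sub_shift_add_shift_eq (h : IsDoublingSeq g A) (hg : 0 < g) (t : ℕ) :
    A t - (if 1 ≤ t then 2 * A (t - 1) else 0) + (if g ≤ t then A (t - g) else 0) =
      (if t = 0 then 1 else 0) + (if t = g then 1 else 0) := by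
  have hpow : ∀ s, s ≤ g → 1 ≤ s → A s = 2 * A (s - 1) := fun s hsg hs ↦ by
    rw [h.eq_two_pow s hsg, h.eq_two_pow (s - 1) (by omega), ← pow_succ']
    congr 1
    omega
  rcases Nat.eq_zero_or_pos t with rfl | ht
  · simp [h.apply_zero, hg.ne, hg.ne']
  rw [if_pos (Nat.succ_le_of_lt ht), if_neg ht.ne']
  rcases lt_trichotomy t g with htg | rfl | htg
  · simp [hpow t htg.le ht, htg.ne, not_le.mpr htg]
  · simp [hpow t le_rfl ht, h.apply_zero]
  · simp [h.eq_two_mul_sub t htg, htg.le, htg.ne']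

theorem hasSum_mul_pow (h : IsDoublingSeq g A) (hg : 0 < g) {z : ℝ} (hz : |z| < 1 / 2) :
    HasSum (fun t ↦ (A t : ℝ) * z ^ t) ((1 + z ^ g) / (1 - 2 * z + z ^ g)) := by
  obtain ⟨S, hS⟩ := summable_mul_pow_of_abs_le_two_pow (a := fun t ↦ (A t : ℝ))
    (fun t ↦ by exact_mod_cast h.abs_le_two_pow hg t) hz
  set c : ℕ → ℝ := fun t ↦
    A t - (if 1 ≤ t then 2 * (A (t - 1) : ℝ) else 0) + (if g ≤ t then (A (t - g) : ℝ) else 0)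
  have hc : HasSum (fun t ↦ c t * z ^ t) (S - z * (2 * S) + z ^ g * S) := by
    have hS₂ : HasSum (fun t ↦ 2 * (A t : ℝ) * z ^ t) (2 * S) := by
      simpa only [mul_assoc] using hS.mul_left 2
    simpa only [c, add_mul, sub_mul, pow_one] using
      (hS.sub (hS₂.shift_mul_pow 1)).add (hS.shift_mul_pow g)
  have hc' : HasSum (fun t ↦ c t * z ^ t) (1 + z ^ g) := by
    have hc_eq : ∀ t, c t = (if t = 0 then (1 : ℝ) else 0) + (if t = g then 1 else 0) :=
      fun t ↦ by simp only [c]; exact_mod_cast h.sub_shift_add_shift_eq hg t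
    refine ((hasSum_ite_eq 0 (1 : ℝ)).add (hasSum_ite_eq g (z ^ g))).congr_fun fun t ↦ ?_
    rw [hc_eq]
    split_ifs <;> simp_all
  convert hS using 1
  rw [div_eq_iff (one_sub_two_mul_add_pow_pos hz g).ne', hc'.unique hc]
  ring

end IsDoublingSeq

/-- For every integer `g ≥ 2` and every real `z` with `|z| < 1/2`, the series
`∑ A_t z^t` converges, `1 − 2z + z^g ≠ 0`, and the sum equals
`(1 + z^g)/(1 − 2z + z^g)`. -/
theorem genFun_real (g : ℕ) (hg : 2 ≤ g) (A : ℕ → ℤ)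
    (hA₁ : ∀ t, t ≤ g → A t = 2 ^ t)
    (hA₂ : ∀ t, g + 1 ≤ t → A t = 2 * A (t - 1) - A (t - g))
    (z : ℝ) (hz : |z| < 1 / 2) :
    1 - 2 * z + z ^ g ≠ 0 ∧
      HasSum (fun t : ℕ => (A t : ℝ) * z ^ t) ((1 + z ^ g) / (1 - 2 * z + z ^ g)) :=
  ⟨(one_sub_two_mul_add_pow_pos hz g).ne', IsDoublingSeq.hasSum_mul_pow ⟨hA₁, hA₂⟩ (by omega) hz⟩
end

section
/- For every integer g ≥ 2, with n = g − 1, the formal power series identity (1 − X) · (1 − X − X^2 − ⋯ − X^n) · (∑_{t≥0} A_t X^t) = 1 + X^g holds in the ring of formal power series over the integers; that is, the generating function of (A_t) equals (1 + X^g)/[(1 − X)(1 − X − ⋯ − X^n)], exhibiting it as a rational multiple of the n-anacci generating function. -/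
/-!
Since `(1 - X)(1 + X + ⋯ + X^(g-1)) = 1 - X^g`, the polynomial factor on the left equals
`1 - 2X + X^g`, whose product with `∑ A_t X^t` has `t`-th coefficient
`A_t - 2 A_(t-1) + A_(t-g)` (terms with negative index omitted). The recurrence kills this for
`t > g`, the doubling `A_t = 2 A_(t-1)` for `1 ≤ t ≤ g` leaves only `A_0 = 1` at `t = g`, and the
constant term is `A_0 = 1`.
-/

open PowerSeries

theorem one_sub_mul_one_sub_sum_Icc_pow {R : Type*} [CommRing R] (x : R) (n : ℕ) :
    (1 - x) * (1 - ∑ i ∈ Finset.Icc 1 n, x ^ i) = 1 - 2 * x + x ^ (n + 1) := by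
  induction n with
  | zero => simp only [Finset.Icc_eq_empty_of_lt zero_lt_one, Finset.sum_empty]; ring
  | succ n ih =>
    rw [Finset.sum_Icc_succ_top (Nat.le_add_left 1 n)]
    linear_combination ih

theorem coeff_one_sub_two_X_add_X_pow_mul_mk {R : Type*} [CommRing R] (g n : ℕ) (A : ℕ → R) :
    coeff n ((1 - 2 * X + X ^ g) * mk A) =
      A n - (if 1 ≤ n then 2 * A (n - 1) else 0) + (if g ≤ n then A (n - g) else 0) := by
  have hsplit : (1 - 2 * X + X ^ g) * mk A = mk A - 2 • (X ^ 1 * mk A) + X ^ g * mk A := by ring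
  rw [hsplit]
  simp only [map_add, map_sub, map_nsmul, coeff_mk, coeff_X_pow_mul']
  split_ifs <;> simp [two_mul]

/-- For every integer `g ≥ 2`, with `n = g − 1`, the generating function of the
ancestor-count sequence `A` satisfies
`(1 − X)·(1 − X − X² − ⋯ − Xⁿ)·(∑ A_t X^t) = 1 + X^g` in `ℤ⟦X⟧`;
i.e., it is a rational multiple of the `n`-anacci generating function. -/
theorem genFun_nanacci (g : ℕ) (hg : 2 ≤ g) (A : ℕ → ℤ)
    (hA₁ : ∀ t, t ≤ g → A t = 2 ^ t)
    (hA₂ : ∀ t, g + 1 ≤ t → A t = 2 * A (t - 1) - A (t - g)) :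
    (1 - (X : PowerSeries ℤ)) * (1 - ∑ i ∈ Finset.Icc 1 (g - 1), (X : PowerSeries ℤ) ^ i) *
      PowerSeries.mk A = 1 + X ^ g := by
  have hg0 : g ≠ 0 := by omega
  have hdouble : ∀ t, 1 ≤ t → t ≤ g → A t = 2 * A (t - 1) := fun t h1 h2 => by
    rw [hA₁ t h2, hA₁ (t - 1) (by omega), ← pow_succ', Nat.sub_add_cancel h1]
  rw [one_sub_mul_one_sub_sum_Icc_pow, Nat.sub_add_cancel (Nat.one_le_iff_ne_zero.mpr hg0)]
  ext t
  rw [coeff_one_sub_two_X_add_X_pow_mul_mk, map_add, coeff_one, coeff_X_pow]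
  rcases Nat.lt_or_ge g t with hgt | hle
  · simp [hA₂ t hgt, hgt.le, hgt.ne', Nat.one_le_of_lt hgt, Nat.ne_zero_of_lt hgt]
  obtain rfl | (hpos : 1 ≤ t) := Nat.eq_zero_or_pos t
  · simp [hA₁ 0 (Nat.zero_le g), hg0, hg0.symm]
  rw [if_pos hpos, hdouble t hpos hle, sub_self, zero_add]
  obtain heq | hlt := hle.eq_or_lt
  · simp [heq, hg0, hA₁ 0 (Nat.zero_le g)]
  · simp [hlt.not_ge, hlt.ne, Nat.one_le_iff_ne_zero.mp hpos]
end

section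
/- For every integer n ≥ 2, the function Q_n(z) = 1 − z − z^2 − ⋯ − z^n has exactly one real root in the open interval (1/2, 1). -/
/-!
`Q_n` is continuous and strictly decreasing on `[0, ∞)`, being `1` minus a sum of increasing
powers. Since `Q_n(1/2) = (1/2)^n > 0` and `Q_n(1) = 1 - n < 0`, the intermediate value theorem
gives a root in `(1/2, 1)`, and strict monotonicity makes it unique.
-/

open Finset

noncomputable section

-- `Q_n`, the denominator of the `n`-anacci generating function.
def nacciDenom (n : ℕ) (z : ℝ) : ℝ := 1 - ∑ i ∈ Icc 1 n, z ^ i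

theorem continuous_nacciDenom (n : ℕ) : Continuous (nacciDenom n) := by
  unfold nacciDenom
  fun_prop

theorem strictMonoOn_sum_Icc_pow {R : Type*} [Semiring R] [LinearOrder R] [IsStrictOrderedRing R]
    {n : ℕ} (hn : 1 ≤ n) : StrictMonoOn (fun z : R => ∑ i ∈ Icc 1 n, z ^ i) (Set.Ici 0) := by
  intro x hx y _ hxy
  apply sum_lt_sum
  · exact fun i _ => pow_le_pow_left₀ hx hxy.le i
  · exact ⟨1, mem_Icc.2 ⟨le_rfl, hn⟩, by simpa using hxy⟩

theorem nacciDenom_strictAntiOn {n : ℕ} (hn : 1 ≤ n) : StrictAntiOn (nacciDenom n) (Set.Ici 0) :=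
  fun _ hx _ hy hxy => sub_lt_sub_left (strictMonoOn_sum_Icc_pow hn hx hy hxy) 1

theorem nacciDenom_half (n : ℕ) : nacciDenom n (1 / 2) = (1 / 2) ^ n := by
  have hIcc : Icc 1 n = Ico 1 (n + 1) := rfl
  rw [nacciDenom, hIcc, geom_sum_Ico' (by norm_num) (by omega)]
  ring

theorem nacciDenom_one (n : ℕ) : nacciDenom n 1 = 1 - n := by
  simp [nacciDenom]

end

/-- For every integer `n ≥ 2`, the function `Q_n(z) = 1 − z − z² − ⋯ − zⁿ`
has exactly one real root in the open interval `(1/2, 1)`. -/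
theorem Q_unique_root (n : ℕ) (hn : 2 ≤ n) :
    ∃! z : ℝ, z ∈ Set.Ioo (1 / 2 : ℝ) 1 ∧ 1 - ∑ i ∈ Finset.Icc 1 n, z ^ i = 0 := by
  have h_half : 0 < nacciDenom n (1 / 2) := by
    rw [nacciDenom_half]
    positivity
  have h_one : nacciDenom n 1 < 0 := by
    rw [nacciDenom_one]
    linarith [show (2 : ℝ) ≤ n by exact_mod_cast hn]
  obtain ⟨z, hz, hz_root⟩ := intermediate_value_Ioo' (by norm_num)
    (continuous_nacciDenom n).continuousOn ⟨h_one, h_half⟩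
  have h_nonneg : Set.Ioo (1 / 2 : ℝ) 1 ⊆ Set.Ici 0 := fun x hx =>
    Set.mem_Ici.2 (by linarith [hx.1])
  refine ⟨z, ⟨hz, hz_root⟩, fun y ⟨hy, hy_root⟩ => ?_⟩
  exact (nacciDenom_strictAntiOn (by omega)).injOn (h_nonneg hy) (h_nonneg hz)
    (hy_root.trans hz_root.symm)
end

section
/- Let c_1 = 1 and, for n ≥ 2, let c_n be the unique real root of Q_n in (1/2, 1). Then for every n ≥ 1, c_{n+1} < c_n. -/
/-! Adding the term `zⁿ⁺¹` makes the sum `z + ⋯ + zⁿ⁺¹` exceed `1` at `z = c n`, and the sum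
is increasing in `z ≥ 0`, so it reaches `1` at a smaller point. -/

open Finset

theorem lt_of_sum_Icc_pow_eq_one {a b : ℝ} {n : ℕ} (ha : 0 < a)
    (hsa : ∑ i ∈ Icc 1 n, a ^ i = 1) (hsb : ∑ i ∈ Icc 1 (n + 1), b ^ i = 1) : b < a := by
  by_contra! hab
  have hsplit : ∑ i ∈ Icc 1 (n + 1), a ^ i = 1 + a ^ (n + 1) := by
    rw [sum_Icc_succ_top (by omega), hsa]
  have hmono : ∑ i ∈ Icc 1 (n + 1), a ^ i ≤ ∑ i ∈ Icc 1 (n + 1), b ^ i :=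
    sum_le_sum fun i _ => pow_le_pow_left₀ ha.le hab i
  have : 0 < a ^ (n + 1) := pow_pos ha _
  linarith

/-- Let `c 1 = 1` and, for `n ≥ 2`, let `c n` be the real root of
`Q_n(z) = 1 − z − z² − ⋯ − zⁿ` lying in `(1/2, 1)`.
Then for every `n ≥ 1`, `c (n+1) < c n`. -/
theorem c_strict_anti (c : ℕ → ℝ) (hc1 : c 1 = 1)
    (hc : ∀ n, 2 ≤ n → c n ∈ Set.Ioo (1 / 2 : ℝ) 1 ∧
      1 - ∑ i ∈ Finset.Icc 1 n, (c n) ^ i = 0) :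
    ∀ n, 1 ≤ n → c (n + 1) < c n := by
  have hroot : ∀ n, 1 ≤ n → 0 < c n ∧ ∑ i ∈ Icc 1 n, c n ^ i = 1 := by
    intro n hn
    rcases hn.eq_or_lt with rfl | hn2
    · simp [hc1]
    · obtain ⟨⟨hlo, -⟩, heq⟩ := hc n hn2
      exact ⟨by linarith, by linarith⟩
  intro n hn
  exact lt_of_sum_Icc_pow_eq_one (hroot n hn).1 (hroot n hn).2 (hroot (n + 1) (by omega)).2
end

section
/- Let c_n (n ≥ 2) be the unique real root of Q_n in (1/2, 1). Then the sequence (c_n) converges to 1/2 as n → ∞. -/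
open Filter

/-! Multiplying `Qₙ` by `1 - z` telescopes to `1 - 2z + zⁿ⁺¹`, so a root satisfies
`2 cₙ - 1 = cₙⁿ⁺¹`. Since `Qₙ(cₙ) = 0` forces `cₙ + cₙ² ≤ 1`, every root lies below `2/3`,
hence `0 ≤ cₙ - 1/2 ≤ (2/3)ⁿ`. -/

theorem one_sub_sum_Icc_pow_mul_one_sub {R : Type*} [CommRing R] (x : R) (n : ℕ) :
    (1 - ∑ i ∈ Finset.Icc 1 n, x ^ i) * (1 - x) = 1 - 2 * x + x ^ (n + 1) := by
  induction n with
  | zero => simp; ring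
  | succ n ih =>
    rw [Finset.sum_Icc_succ_top (by omega), pow_succ x (n + 1)]
    linear_combination ih

theorem lt_two_thirds_of_sum_Icc_pow_eq_one {x : ℝ} {n : ℕ} (hn : 2 ≤ n) (hx : 0 ≤ x)
    (h : ∑ i ∈ Finset.Icc 1 n, x ^ i = 1) : x < 2 / 3 := by
  have hsub : Finset.Icc 1 2 ⊆ Finset.Icc 1 n := Finset.Icc_subset_Icc_right hn
  have hle : x + x ^ 2 ≤ 1 := by
    calc x + x ^ 2 = ∑ i ∈ Finset.Icc 1 2, x ^ i := by
          rw [Finset.sum_Icc_succ_top (by norm_num), Finset.Icc_self, Finset.sum_singleton,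
            pow_one]
      _ ≤ ∑ i ∈ Finset.Icc 1 n, x ^ i :=
          Finset.sum_le_sum_of_subset_of_nonneg hsub fun i _ _ => pow_nonneg hx i
      _ = 1 := h
  nlinarith

theorem sub_half_mem_Icc_of_sum_Icc_pow_eq_one {x : ℝ} {n : ℕ} (hn : 2 ≤ n) (hx : 0 < x)
    (h : 1 - ∑ i ∈ Finset.Icc 1 n, x ^ i = 0) : x - 1 / 2 ∈ Set.Icc 0 ((2 / 3 : ℝ) ^ n) := by
  have hpow : 2 * x - 1 = x ^ (n + 1) := by
    have := one_sub_sum_Icc_pow_mul_one_sub x n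
    rw [h, zero_mul] at this
    linarith
  have hx23 : x < 2 / 3 := lt_two_thirds_of_sum_Icc_pow_eq_one hn hx.le (by linarith)
  have hbound : x ^ (n + 1) ≤ (2 / 3 : ℝ) ^ (n + 1) := pow_le_pow_left₀ hx.le hx23.le _
  constructor
  · linarith [pow_pos hx (n + 1)]
  · rw [pow_succ (2 / 3 : ℝ)] at hbound
    linarith [pow_pos (by norm_num : (0 : ℝ) < 2 / 3) n]

/-- For `n ≥ 2`, let `c n` be the real root of `Q_n(z) = 1 − z − z² − ⋯ − zⁿ`
lying in `(1/2, 1)`. Then `c n → 1/2` as `n → ∞`. -/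
theorem c_tendsto_half (c : ℕ → ℝ)
    (hc : ∀ n, 2 ≤ n → c n ∈ Set.Ioo (1 / 2 : ℝ) 1 ∧
      1 - ∑ i ∈ Finset.Icc 1 n, (c n) ^ i = 0) :
    Tendsto c atTop (nhds (1 / 2 : ℝ)) := by
  have hbound : ∀ᶠ n in atTop, c n - 1 / 2 ∈ Set.Icc 0 ((2 / 3 : ℝ) ^ n) :=
    eventually_atTop.2 ⟨2, fun n hn =>
      sub_half_mem_Icc_of_sum_Icc_pow_eq_one hn (by linarith [(hc n hn).1.1]) (hc n hn).2⟩
  rw [← tendsto_sub_nhds_zero_iff]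
  exact squeeze_zero' (hbound.mono fun _ h => h.1) (hbound.mono fun _ h => h.2)
    (tendsto_pow_atTop_nhds_zero_of_lt_one (by norm_num) (by norm_num))
end

section
/- For every integer g ≥ 3, the sequence (A_t)_{t≥1} is strictly increasing, and the ratio A_{t+1}/A_t converges as t → ∞ to r_g, the unique real root in (1, 2) of r^g − 2r^{g−1} + 1. -/
/-!
The differences `D t = A (t + 1) - A t` obey the `(g - 1)`-step Fibonacci recurrence
`D (t + g - 1) = D t + ⋯ + D (t + g - 2)` for `t ≥ 1`, so they are positive and `A` increases.
Since `r ^ (g - 1) = 1 + r + ⋯ + r ^ (g - 2)`, each new term of `D t / r ^ t` is a weighted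
average of the previous `g - 1` terms with weights bounded below; the spread of a window of
`g - 1` consecutive terms then contracts, so `D t / r ^ t` tends to a positive limit and
`D (t + 1) / D t → r`. The discrete Stolz–Cesàro theorem carries this over to
`A (t + 1) / A t`.
-/

open Filter Finset Topology Asymptotics

theorem tendsto_div_of_tendsto_sub_div_sub {f g : ℕ → ℝ} {ℓ : ℝ}
    (hg : ∀ n, 0 < g (n + 1) - g n) (hg_top : Tendsto g atTop atTop)
    (h : Tendsto (fun n => (f (n + 1) - f n) / (g (n + 1) - g n)) atTop (𝓝 ℓ)) :
    Tendsto (fun n => f n / g n) atTop (𝓝 ℓ) := by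
  set e : ℕ → ℝ := fun n => f n - ℓ * g n
  have hΔ : (fun n => e (n + 1) - e n) =o[atTop] fun n => g (n + 1) - g n := by
    refine (((isLittleO_one_iff ℝ).2 (tendsto_sub_nhds_zero_iff.2 h)).mul_isBigO
      (isBigO_refl (fun n => g (n + 1) - g n) atTop)).congr (fun n => ?_) (fun n => one_mul _)
    field_simp [(hg n).ne']
    ring
  have hsum : (fun n => e n - e 0) =o[atTop] fun n => g n - g 0 := by
    simpa only [sum_range_sub] using hΔ.sum_range (fun n => (hg n).le) (by
      rw [funext fun n => sum_range_sub g n]; exact tendsto_atTop_add_const_right _ (-g 0) hg_top)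
  have hconst (c : ℝ) : (fun _ => c) =o[atTop] g :=
    isLittleO_const_left.2 (Or.inr (tendsto_norm_atTop_atTop.comp hg_top))
  have he : e =o[atTop] g :=
    ((hsum.trans_isBigO ((isBigO_refl g atTop).sub (hconst _).isBigO)).add
      (hconst (e 0))).congr_left fun n => sub_add_cancel _ _
  refine (zero_add ℓ ▸ he.tendsto_div_nhds_zero.add_const ℓ).congr' ?_
  filter_upwards [hg_top.eventually_gt_atTop 0] with n hn
  simp only [e]
  field_simp
  ring

section WeightedAverage

variable {x a : ℕ → ℝ} {n : ℕ} {c : ℝ}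

def windowMax (x : ℕ → ℝ) (n t : ℕ) : ℝ :=
  (range (n + 1)).sup' nonempty_range_add_one fun j => x (t + j)

def windowMin (x : ℕ → ℝ) (n t : ℕ) : ℝ :=
  (range (n + 1)).inf' nonempty_range_add_one fun j => x (t + j)

lemma le_windowMax {t j : ℕ} (hj : j ≤ n) : x (t + j) ≤ windowMax x n t :=
  le_sup' (fun j => x (t + j)) (mem_range.2 (Nat.lt_succ_of_le hj))

lemma windowMin_le {t j : ℕ} (hj : j ≤ n) : windowMin x n t ≤ x (t + j) :=
  inf'_le (fun j => x (t + j)) (mem_range.2 (Nat.lt_succ_of_le hj))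

lemma windowMax_le {t : ℕ} {B : ℝ} (h : ∀ j ≤ n, x (t + j) ≤ B) : windowMax x n t ≤ B :=
  sup'_le _ _ fun j hj => h j (Nat.le_of_lt_succ (mem_range.1 hj))

lemma le_windowMin {t : ℕ} {B : ℝ} (h : ∀ j ≤ n, B ≤ x (t + j)) : B ≤ windowMin x n t :=
  le_inf' _ _ fun j hj => h j (Nat.le_of_lt_succ (mem_range.1 hj))

lemma exists_eq_windowMin (x : ℕ → ℝ) (n t : ℕ) :
    ∃ j ≤ n, x (t + j) = windowMin x n t := by
  obtain ⟨j, hj, h⟩ := exists_mem_eq_inf' nonempty_range_add_one fun j => x (t + j)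
  exact ⟨j, Nat.le_of_lt_succ (mem_range.1 hj), h.symm⟩

lemma windowMin_le_windowMax (x : ℕ → ℝ) (n t : ℕ) : windowMin x n t ≤ windowMax x n t :=
  (windowMin_le n.zero_le).trans (le_windowMax n.zero_le)

lemma sub_eq_sum_mul_sub (hsum : ∑ j ∈ range (n + 1), a j = 1)
    (hx : ∀ t, x (t + (n + 1)) = ∑ j ∈ range (n + 1), a j * x (t + j)) (t : ℕ) (B : ℝ) :
    x (t + (n + 1)) - B = ∑ j ∈ range (n + 1), a j * (x (t + j) - B) := by
  simp only [hx, mul_sub, sum_sub_distrib, ← sum_mul, hsum, one_mul]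

lemma le_of_le_window (ha : ∀ j ≤ n, 0 ≤ a j) (hsum : ∑ j ∈ range (n + 1), a j = 1)
    (hx : ∀ t, x (t + (n + 1)) = ∑ j ∈ range (n + 1), a j * x (t + j)) {t : ℕ} {B : ℝ}
    (hB : ∀ j ≤ n, B ≤ x (t + j)) : B ≤ x (t + (n + 1)) := by
  have := sub_eq_sum_mul_sub hsum hx t B
  have : 0 ≤ ∑ j ∈ range (n + 1), a j * (x (t + j) - B) := sum_nonneg fun j hj =>
    have hj := Nat.le_of_lt_succ (mem_range.1 hj)
    mul_nonneg (ha j hj) (sub_nonneg.2 (hB j hj))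
  linarith

lemma le_sub_mul_of_window_le (ha : ∀ j ≤ n, 0 ≤ a j)
    (hsum : ∑ j ∈ range (n + 1), a j = 1)
    (hx : ∀ t, x (t + (n + 1)) = ∑ j ∈ range (n + 1), a j * x (t + j))
    {t j₀ : ℕ} {B : ℝ} (hB : ∀ j ≤ n, x (t + j) ≤ B) (hj₀ : j₀ ≤ n) :
    x (t + (n + 1)) ≤ B - a j₀ * (B - x (t + j₀)) := by
  have h := sub_eq_sum_mul_sub hsum hx t B
  have : a j₀ * (B - x (t + j₀)) ≤ ∑ j ∈ range (n + 1), a j * (B - x (t + j)) :=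
    single_le_sum (f := fun j => a j * (B - x (t + j))) (fun j hj =>
      have hj := Nat.le_of_lt_succ (mem_range.1 hj)
      mul_nonneg (ha j hj) (sub_nonneg.2 (hB j hj))) (mem_range.2 (Nat.lt_succ_of_le hj₀))
  simp only [mul_sub, sum_sub_distrib] at h this
  linarith

lemma windowMax_antitone (ha : ∀ j ≤ n, 0 ≤ a j) (hsum : ∑ j ∈ range (n + 1), a j = 1)
    (hx : ∀ t, x (t + (n + 1)) = ∑ j ∈ range (n + 1), a j * x (t + j)) :
    Antitone (windowMax x n) := by
  refine antitone_nat_of_succ_le fun t => windowMax_le fun j hj => ?_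
  rcases hj.lt_or_eq with hj | hj
  · simpa only [add_assoc, add_comm 1 j] using
      le_windowMax (x := x) (t := t) (Nat.succ_le_of_lt hj)
  · rw [hj]
    have hB : ∀ j ≤ n, x (t + j) ≤ windowMax x n t := fun j hj => le_windowMax hj
    have := le_sub_mul_of_window_le ha hsum hx hB n.zero_le
    rw [add_assoc, add_comm 1 n]
    nlinarith [ha 0 n.zero_le, hB 0 n.zero_le]

lemma windowMin_monotone (ha : ∀ j ≤ n, 0 ≤ a j) (hsum : ∑ j ∈ range (n + 1), a j = 1)
    (hx : ∀ t, x (t + (n + 1)) = ∑ j ∈ range (n + 1), a j * x (t + j)) :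
    Monotone (windowMin x n) := by
  refine monotone_nat_of_le_succ fun t => le_windowMin fun j hj => ?_
  rcases hj.lt_or_eq with hj | hj
  · simpa only [add_assoc, add_comm 1 j] using
      windowMin_le (x := x) (t := t) (Nat.succ_le_of_lt hj)
  · rw [hj, add_assoc, add_comm 1 n]
    exact le_of_le_window ha hsum hx fun j hj => windowMin_le hj

lemma le_windowMax_sub_pow_mul (hc : 0 < c) (ha : ∀ j ≤ n, c ≤ a j)
    (hsum : ∑ j ∈ range (n + 1), a j = 1)
    (hx : ∀ t, x (t + (n + 1)) = ∑ j ∈ range (n + 1), a j * x (t + j)) (t i : ℕ) :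
    x (t + i + (n + 1)) ≤
      windowMax x n t - c ^ (i + 1) * (windowMax x n t - windowMin x n t) := by
  -- The window preceding each new term contains the previous new term, which lies at least
  -- `c ^ i` times the initial spread below the maximum.
  have ha₀ : ∀ j ≤ n, 0 ≤ a j := fun j hj => hc.le.trans (ha j hj)
  have hgap := sub_nonneg.2 (windowMin_le_windowMax x n t)
  induction i with
  | zero =>
    obtain ⟨j₀, hj₀, hmin⟩ := exists_eq_windowMin x n t
    have := le_sub_mul_of_window_le ha₀ hsum hx (fun j hj => le_windowMax (t := t) hj) hj₀
    rw [hmin] at this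
    rw [add_zero, pow_one]
    nlinarith [ha j₀ hj₀]
  | succ i ih =>
    have hB : ∀ j ≤ n, x (t + (i + 1) + j) ≤ windowMax x n t := fun j hj =>
      (le_windowMax hj).trans (windowMax_antitone ha₀ hsum hx (Nat.le_add_right t (i + 1)))
    have := le_sub_mul_of_window_le ha₀ hsum hx hB le_rfl
    rw [show t + (i + 1) + n = t + i + (n + 1) by ring] at this
    have hpow : 0 ≤ c ^ (i + 1) * (windowMax x n t - windowMin x n t) :=
      mul_nonneg (pow_nonneg hc.le _) hgap
    rw [pow_succ']
    nlinarith [ha n le_rfl]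

lemma windowMax_add_le (hc : 0 < c) (ha : ∀ j ≤ n, c ≤ a j)
    (hsum : ∑ j ∈ range (n + 1), a j = 1)
    (hx : ∀ t, x (t + (n + 1)) = ∑ j ∈ range (n + 1), a j * x (t + j)) (t : ℕ) :
    windowMax x n (t + (n + 1)) ≤
      windowMax x n t - c ^ (n + 1) * (windowMax x n t - windowMin x n t) := by
  have hc₁ : c ≤ 1 := hsum ▸ (ha 0 n.zero_le).trans (single_le_sum
    (fun j hj => hc.le.trans (ha j (Nat.le_of_lt_succ (mem_range.1 hj))))
    (mem_range.2 n.succ_pos))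
  refine windowMax_le fun j hj => ?_
  have hpow : c ^ (n + 1) ≤ c ^ (j + 1) := pow_le_pow_of_le_one hc.le hc₁ (by omega)
  have := le_windowMax_sub_pow_mul hc ha hsum hx t j
  rw [add_right_comm] at this
  nlinarith [windowMin_le_windowMax x n t]

theorem exists_tendsto_of_eq_weighted_sum (hc : 0 < c) (ha : ∀ j ≤ n, c ≤ a j)
    (hsum : ∑ j ∈ range (n + 1), a j = 1)
    (hx : ∀ t, x (t + (n + 1)) = ∑ j ∈ range (n + 1), a j * x (t + j)) :
    ∃ ℓ, windowMin x n 0 ≤ ℓ ∧ Tendsto x atTop (𝓝 ℓ) := by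
  have ha₀ : ∀ j ≤ n, 0 ≤ a j := fun j hj => hc.le.trans (ha j hj)
  have hM := windowMax_antitone ha₀ hsum hx
  have hm := windowMin_monotone ha₀ hsum hx
  have hmM := windowMin_le_windowMax x n
  have hMlim := tendsto_atTop_ciInf hM ⟨windowMin x n 0, by
    rintro _ ⟨t, rfl⟩; exact (hm t.zero_le).trans (hmM t)⟩
  have hmlim := tendsto_atTop_ciSup hm ⟨windowMax x n 0, by
    rintro _ ⟨t, rfl⟩; exact (hmM t).trans (hM t.zero_le)⟩
  set M := ⨅ t, windowMax x n t
  set m := ⨆ t, windowMin x n t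
  -- Passing to the limit in `windowMax_add_le` forces `M ≤ m`.
  have hcontract : M ≤ M - c ^ (n + 1) * (M - m) :=
    le_of_tendsto_of_tendsto' (hMlim.comp (tendsto_add_atTop_nat (n + 1)))
      (hMlim.sub ((hMlim.sub hmlim).const_mul _)) (windowMax_add_le hc ha hsum hx)
  have hm_le_M : m ≤ M := le_of_tendsto_of_tendsto' hmlim hMlim hmM
  have hM_eq_m : M = m := by nlinarith [pow_pos hc (n + 1)]
  refine ⟨m, hm.ge_of_tendsto hmlim 0, tendsto_of_tendsto_of_tendsto_of_le_of_le hmlim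
    (hM_eq_m ▸ hMlim) (fun t => ?_) (fun t => ?_)⟩
  · simpa using windowMin_le (x := x) (t := t) n.zero_le
  · simpa using le_windowMax (x := x) (t := t) n.zero_le

end WeightedAverage

namespace AncestorCount

variable {n : ℕ} {A : ℕ → ℤ}

lemma diff_eq_two_pow (hA₁ : ∀ t, t ≤ n + 2 → A t = 2 ^ t) {t : ℕ} (ht : t ≤ n + 1) :
    A (t + 1) - A t = 2 ^ t := by
  rw [hA₁ t (by omega), hA₁ (t + 1) (by omega), pow_succ]
  ring

lemma diff_add_eq_sum_diff
    (hA₂ : ∀ t, n + 2 + 1 ≤ t → A t = 2 * A (t - 1) - A (t - (n + 2)))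
    {t : ℕ} (ht : 1 ≤ t) :
    A (t + (n + 1) + 1) - A (t + (n + 1)) =
      ∑ j ∈ range (n + 1), (A (t + j + 1) - A (t + j)) := by
  have h := hA₂ (t + (n + 1) + 1) (by omega)
  rw [show t + (n + 1) + 1 - 1 = t + (n + 1) by omega,
    show t + (n + 1) + 1 - (n + 2) = t by omega] at h
  have hsum := sum_range_sub (fun j => A (t + j)) (n + 1)
  simp only [← add_assoc, add_zero] at hsum
  rw [hsum, h, ← add_assoc]
  ring

lemma diff_pos (hA₁ : ∀ t, t ≤ n + 2 → A t = 2 ^ t)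
    (hA₂ : ∀ t, n + 2 + 1 ≤ t → A t = 2 * A (t - 1) - A (t - (n + 2))) (t : ℕ) :
    0 < A (t + 1) - A t := by
  induction t using Nat.strong_induction_on with
  | _ t ih =>
    rcases le_or_gt t (n + 1) with ht | ht
    · rw [diff_eq_two_pow hA₁ ht]
      positivity
    · obtain ⟨s, rfl⟩ : ∃ s, t = s + (n + 1) := ⟨t - (n + 1), by omega⟩
      rw [diff_add_eq_sum_diff hA₂ (by omega)]
      exact sum_pos (fun j hj => ih _ (by rw [mem_range] at hj; omega)) nonempty_range_add_one

lemma tendsto_atTop (hA₁ : ∀ t, t ≤ n + 2 → A t = 2 ^ t)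
    (hA₂ : ∀ t, n + 2 + 1 ≤ t → A t = 2 * A (t - 1) - A (t - (n + 2))) :
    Tendsto (fun t => (A t : ℝ)) atTop atTop := by
  have h (t : ℕ) : (t : ℤ) ≤ A t := by
    induction t with
    | zero => simp [hA₁ 0 (by omega)]
    | succ t ih => push_cast; linarith [diff_pos hA₁ hA₂ t]
  exact tendsto_atTop_mono (fun t => by exact_mod_cast h t) tendsto_natCast_atTop_atTop

lemma tendsto_diff_div_diff (hA₁ : ∀ t, t ≤ n + 2 → A t = 2 ^ t)
    (hA₂ : ∀ t, n + 2 + 1 ≤ t → A t = 2 * A (t - 1) - A (t - (n + 2)))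
    {r : ℝ} (hr : 1 < r) (hroot : r ^ (n + 2) - 2 * r ^ (n + 1) + 1 = 0) :
    Tendsto (fun t => ((A (t + 2) : ℝ) - A (t + 1)) / ((A (t + 1) : ℝ) - A t))
      atTop (𝓝 r) := by
  have hr₀ : 0 < r := by linarith
  have hD (t : ℕ) : (0 : ℝ) < A (t + 1) - A t := by exact_mod_cast diff_pos hA₁ hA₂ t
  -- Shifted by one, since the recurrence of the differences only starts at `t = 1`.
  set e : ℕ → ℝ := fun t => ((A (t + 2) : ℝ) - A (t + 1)) / r ^ (t + 1) with he_def
  set a : ℕ → ℝ := fun j => r ^ j / r ^ (n + 1) with ha_def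
  have ha : ∀ j ≤ n, 1 / r ^ (n + 1) ≤ a j := fun j _ =>
    div_le_div_of_nonneg_right (one_le_pow₀ hr.le) (by positivity)
  have hsum : ∑ j ∈ range (n + 1), a j = 1 := by
    rw [← sum_div, geom_sum_eq hr.ne', div_div, div_eq_one_iff_eq (by positivity)]
    linear_combination -hroot
  have hrec (t : ℕ) : e (t + (n + 1)) = ∑ j ∈ range (n + 1), a j * e (t + j) := by
    have h : ((A (t + 1 + (n + 1) + 1) : ℝ) - A (t + 1 + (n + 1))) =
        ∑ j ∈ range (n + 1), ((A (t + 1 + j + 1) : ℝ) - A (t + 1 + j)) := by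
      exact_mod_cast diff_add_eq_sum_diff hA₂ (t := t + 1) (by omega)
    simp only [he_def, ha_def]
    rw [show t + (n + 1) + 2 = t + 1 + (n + 1) + 1 by ring,
      show t + (n + 1) + 1 = t + 1 + (n + 1) by ring, h, sum_div]
    refine sum_congr rfl fun j _ => ?_
    rw [show t + j + 2 = t + 1 + j + 1 by ring, show t + j + 1 = t + 1 + j by ring]
    field_simp
    ring
  obtain ⟨ℓ, hℓ, he⟩ := exists_tendsto_of_eq_weighted_sum (by positivity) ha hsum hrec
  have hℓ₀ : 0 < ℓ := by
    obtain ⟨j, _, hj⟩ := exists_eq_windowMin e n 0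
    exact ((div_pos (hD _) (by positivity)).trans_eq hj).trans_le hℓ
  have := ((he.comp (tendsto_add_atTop_nat 1)).div he hℓ₀.ne').const_mul r
  rw [div_self hℓ₀.ne', mul_one] at this
  refine (tendsto_add_atTop_iff_nat 1).1 (this.congr fun t => ?_)
  simp only [Pi.div_apply, Function.comp_apply, he_def]
  have h₁ := (hD (t + 1)).ne'
  have h₂ := (hD t).ne'
  field_simp
  ring

end AncestorCount

/-- For every integer `g ≥ 3`, the ancestor-count sequence `(A t)` for `t ≥ 1` is
strictly increasing, and the ratio `A (t+1) / A t` converges as `t → ∞` to `r`,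
the unique real root in `(1, 2)` of `r^g − 2r^{g−1} + 1`. -/
theorem A_increasing_ratio_tendsto (g : ℕ) (hg : 3 ≤ g) (A : ℕ → ℤ)
    (hA₁ : ∀ t, t ≤ g → A t = 2 ^ t)
    (hA₂ : ∀ t, g + 1 ≤ t → A t = 2 * A (t - 1) - A (t - g))
    (r : ℝ) (hr : r ∈ Set.Ioo (1 : ℝ) 2)
    (hroot : r ^ g - 2 * r ^ (g - 1) + 1 = 0) :
    (∀ t, 1 ≤ t → A t < A (t + 1)) ∧
    Tendsto (fun t : ℕ => (A (t + 1) : ℝ) / (A t : ℝ)) atTop (nhds r) := by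
  obtain ⟨n, rfl⟩ : ∃ n, g = n + 2 := ⟨g - 2, by omega⟩
  refine ⟨fun t _ => sub_pos.1 (AncestorCount.diff_pos hA₁ hA₂ t), ?_⟩
  exact tendsto_div_of_tendsto_sub_div_sub
    (fun t => by exact_mod_cast AncestorCount.diff_pos hA₁ hA₂ t)
    (AncestorCount.tendsto_atTop hA₁ hA₂)
    (AncestorCount.tendsto_diff_div_diff hA₁ hA₂ hr.1 hroot)
end
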